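/- Let a_{ts}^{-1} denote the inverse of a band generator in B_n. Then a_{ts}^{-1} = δ^{-1} · δ_{(n,n-1,…,t+1,t,s-1,s-2,…,2,1)} · δ_{(t-1,t-2,…,s+1,s)}, where for a descending sequence (u_m,…,u_1) the symbol δ_{(u_m,…,u_1)} denotes the positive braid a_{u_m u_{m-1}} a_{u_{m-1} u_{m-2}} ⋯ a_{u_2 u_1}. In particular each a_{ts}^{-1} equals δ^{-1} times a positive word of length n−2 in the band generators. -/
import Mathlib

/-- Relators for the Artin presentation of the braid group `B n`.
Generator `i : Fin (n-1)` stands for the Artin generator `σ_{i+1}`. -/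
def braidRels (n : ℕ) : Set (FreeGroup (Fin (n - 1))) :=
  {r | (∃ i j : Fin (n - 1), (i : ℕ) + 1 < (j : ℕ) ∧
          r = FreeGroup.of i * FreeGroup.of j * (FreeGroup.of i)⁻¹ * (FreeGroup.of j)⁻¹) ∨
       (∃ i j : Fin (n - 1), (i : ℕ) + 1 = (j : ℕ) ∧
          r = FreeGroup.of i * FreeGroup.of j * FreeGroup.of i *
              (FreeGroup.of j * FreeGroup.of i * FreeGroup.of j)⁻¹)}

/-- The braid group on `n` strands, via the Artin presentation. -/
abbrev Braid (n : ℕ) := PresentedGroup (braidRels n)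

/-- The Artin generator `σ_i` of `B n`, defined for `1 ≤ i ≤ n-1`
(junk value `1` out of range). -/
def sigma (n i : ℕ) : Braid n :=
  if h : i - 1 < n - 1 ∧ 1 ≤ i then PresentedGroup.of ⟨i - 1, h.1⟩ else 1

/-- The band generator
`a_{ts} = (σ_{t-1} ⋯ σ_{s+1}) σ_s (σ_{s+1}⁻¹ ⋯ σ_{t-1}⁻¹)` for `n ≥ t > s ≥ 1`. -/
def band (n t s : ℕ) : Braid n :=
  (((List.range (t - 1 - s)).map (fun k => sigma n (t - 1 - k))).prod) * sigma n s *
    (((List.range (t - 1 - s)).map (fun k => sigma n (t - 1 - k))).prod)⁻¹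

/-- The fundamental element `δ = σ_{n-1} σ_{n-2} ⋯ σ_1`. -/
def delta (n : ℕ) : Braid n :=
  ((List.range (n - 1)).map (fun k => sigma n (n - 1 - k))).prod

/-- For a (descending) list `l = [u_m, …, u_1]`, the positive braid
`δ_l = a_{u_m u_{m-1}} a_{u_{m-1} u_{m-2}} ⋯ a_{u_2 u_1}` (identity when `m ≤ 1`). -/
def descProd (n : ℕ) (l : List ℕ) : Braid n :=
  ((l.zip l.tail).map (fun x => band n x.1 x.2)).prod

/-! ### Auxiliary lemmas -/

lemma rel_one {n : ℕ} {r} (h : r ∈ braidRels n) : PresentedGroup.mk (braidRels n) r = 1 := by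
  apply (QuotientGroup.eq_one_iff r).mpr
  exact Subgroup.subset_normalClosure h

lemma sigma_comm {n : ℕ} (i j : ℕ) (h : i + 2 ≤ j) : Commute (sigma n i) (sigma n j) := by
  unfold sigma
  split_ifs with h1 h2
  · obtain ⟨hi1, hi2⟩ := h1; obtain ⟨hj1, hj2⟩ := h2
    have hr : (FreeGroup.of (⟨i-1, hi1⟩ : Fin (n-1)) * FreeGroup.of (⟨j-1, hj1⟩ : Fin (n-1)) *
        (FreeGroup.of (⟨i-1, hi1⟩ : Fin (n-1)))⁻¹ * (FreeGroup.of (⟨j-1, hj1⟩ : Fin (n-1)))⁻¹)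
        ∈ braidRels n := Or.inl ⟨_, _, by simp; omega, rfl⟩
    have h0 := rel_one hr
    simp only [map_mul, map_inv] at h0
    rw [← commutatorElement_def] at h0
    exact commutatorElement_eq_one_iff_mul_comm.mp h0
  · exact Commute.one_right _
  · exact Commute.one_left _
  · exact Commute.one_left _

lemma sigma_braid {n : ℕ} (i : ℕ) (hi : 1 ≤ i) (hn : i + 1 ≤ n - 1) :
    sigma n i * sigma n (i+1) * sigma n i = sigma n (i+1) * sigma n i * sigma n (i+1) := by
  have h1 : i - 1 < n - 1 ∧ 1 ≤ i := ⟨by omega, hi⟩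
  have h2 : (i+1) - 1 < n - 1 ∧ 1 ≤ i + 1 := ⟨by omega, by omega⟩
  rw [sigma, sigma, dif_pos h1, dif_pos h2]
  have hr : (FreeGroup.of (⟨i-1, h1.1⟩ : Fin (n-1)) * FreeGroup.of (⟨(i+1)-1, h2.1⟩ : Fin (n-1)) * FreeGroup.of (⟨i-1, h1.1⟩ : Fin (n-1)) *
      (FreeGroup.of (⟨(i+1)-1, h2.1⟩ : Fin (n-1)) * FreeGroup.of (⟨i-1, h1.1⟩ : Fin (n-1)) * FreeGroup.of (⟨(i+1)-1, h2.1⟩ : Fin (n-1)))⁻¹)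
      ∈ braidRels n := Or.inr ⟨_, _, by simp; omega, rfl⟩
  have h0 := rel_one hr
  simp only [map_mul, map_inv] at h0
  exact mul_inv_eq_one.mp h0

/-- descending product `σ_a σ_{a-1} ⋯ σ_b` -/
def Dp (n a b : ℕ) : Braid n := ((List.range (a + 1 - b)).map (fun k => sigma n (a - k))).prod

lemma Dp_of_lt {n a b : ℕ} (h : a < b) : Dp n a b = 1 := by
  unfold Dp
  have : a + 1 - b = 0 := by omega
  simp [this]

lemma Dp_peel_left {n a b : ℕ} (hb : 1 ≤ b) (h : b ≤ a) :
    Dp n a b = sigma n a * Dp n (a-1) b := by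
  unfold Dp
  have h1 : a + 1 - b = (a - b) + 1 := by omega
  have h2 : (a - 1) + 1 - b = a - b := by omega
  rw [h1, h2, List.range_succ_eq_map, List.map_cons, List.prod_cons, List.map_map]
  simp only [Nat.sub_zero]
  refine congrArg (fun z => sigma n a * z) (congrArg List.prod (List.map_congr_left fun k hk => ?_))
  simp only [Function.comp_apply]
  congr 1
  omega

lemma Dp_peel_right {n a b : ℕ} (h : b ≤ a) :
    Dp n a b = Dp n a (b+1) * sigma n b := by
  unfold Dp
  have h1 : a + 1 - b = (a + 1 - (b+1)) + 1 := by omega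
  rw [h1, List.range_succ, List.map_append, List.prod_append]
  simp
  congr 1
  omega

lemma commute_Dp_right {n a b : ℕ} {x : Braid n}
    (h : ∀ i, b ≤ i → i ≤ a → Commute x (sigma n i)) : Commute x (Dp n a b) := by
  unfold Dp
  apply Commute.list_prod_right
  intro y hy
  simp only [List.mem_map, List.mem_range] at hy
  obtain ⟨k, hk, rfl⟩ := hy
  exact h (a - k) (by omega) (by omega)

lemma commute_sigma_Dp_hi {n a b j : ℕ} (h : a + 2 ≤ j) : Commute (sigma n j) (Dp n a b) :=
  commute_Dp_right fun i _ hi => (sigma_comm i j (by omega)).symm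

lemma commute_sigma_Dp_lo {n a b j : ℕ} (h : j + 2 ≤ b) : Commute (sigma n j) (Dp n a b) :=
  commute_Dp_right fun i hi _ => sigma_comm j i (by omega)

lemma Dp_shift {n a b i : ℕ} (hb : 1 ≤ b) (hbi : b ≤ i) (hia : i + 1 ≤ a) (han : a ≤ n - 1) :
    sigma n i * Dp n a b = Dp n a b * sigma n (i+1) := by
  induction a using Nat.strong_induction_on with
  | _ a ih =>
    rcases Nat.lt_or_ge (i+1) a with hlt | hge
    · rw [Dp_peel_left hb (by omega), ← mul_assoc, (sigma_comm i a (by omega)).eq,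
        mul_assoc, ih (a-1) (by omega) (by omega) (by omega), mul_assoc]
    · have ha : a = i + 1 := by omega
      subst ha
      have hpl : Dp n (i+1) b = sigma n (i+1) * (sigma n i * Dp n (i-1) b) := by
        rw [Dp_peel_left hb (by omega)]
        congr 1
        have h' : i + 1 - 1 = i := by omega
        rw [h', Dp_peel_left hb (by omega)]
      calc sigma n i * Dp n (i+1) b
          = sigma n i * sigma n (i+1) * sigma n i * Dp n (i-1) b := by
            rw [hpl]; simp only [mul_assoc]
        _ = sigma n (i+1) * sigma n i * sigma n (i+1) * Dp n (i-1) b := by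
            rw [sigma_braid i (by omega) (by omega)]
        _ = sigma n (i+1) * sigma n i * Dp n (i-1) b * sigma n (i+1) := by
            rw [mul_assoc (sigma n (i+1) * sigma n i),
              (commute_sigma_Dp_hi (a := i - 1) (b := b) (j := i+1) (by omega)).eq]
            simp only [mul_assoc]
        _ = Dp n (i+1) b * sigma n (i+1) := by rw [hpl]; simp only [mul_assoc]

lemma Dp_shiftProd {n a b c : ℕ} (hb : 1 ≤ b) (hbc : b ≤ c + 1) (hca : c + 1 ≤ a)
    (han : a ≤ n - 1) : Dp n c b * Dp n a b = Dp n a b * Dp n (c+1) (b+1) := by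
  induction c using Nat.strong_induction_on with
  | _ c ih =>
    rcases Nat.lt_or_ge c b with hlt | hge
    · rw [Dp_of_lt hlt, Dp_of_lt (show c + 1 < b + 1 by omega), one_mul, mul_one]
    · have hc1 : c - 1 + 1 = c := by omega
      calc Dp n c b * Dp n a b
          = sigma n c * (Dp n (c-1) b * Dp n a b) := by
            rw [Dp_peel_left hb hge]; simp only [mul_assoc]
        _ = sigma n c * (Dp n a b * Dp n (c-1+1) (b+1)) := by
            rw [ih (c-1) (by omega) (by omega) (by omega)]
        _ = (sigma n c * Dp n a b) * Dp n c (b+1) := by rw [hc1]; simp only [mul_assoc]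
        _ = Dp n a b * (sigma n (c+1) * Dp n c (b+1)) := by
            rw [Dp_shift hb hge (by omega) han]; simp only [mul_assoc]
        _ = Dp n a b * Dp n (c+1) (b+1) := by
            congr 1
            have h1 : c + 1 - 1 = c := by omega
            conv_rhs => rw [Dp_peel_left (show 1 ≤ b + 1 by omega) (show b + 1 ≤ c + 1 by omega), h1]

lemma Dp_split {n a b c : ℕ} (hb : 1 ≤ b) (hbc : b ≤ c) (hca : c ≤ a + 1) :
    Dp n a b = Dp n a c * Dp n (c-1) b := by
  induction c, hbc using Nat.le_induction with
  | base => rw [Dp_of_lt (show b - 1 < b by omega), mul_one]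
  | succ c hc ih =>
    rw [ih (by omega), Dp_peel_right (show c ≤ a by omega), mul_assoc]
    congr 1
    have h1 : c + 1 - 1 = c := by omega
    rw [h1]
    exact (Dp_peel_left hb (by omega)).symm

/-! ### descProd lemmas -/

/-- the descending list `[m, m-1, …, l]` -/
def cl (m l : ℕ) : List ℕ := (List.range (m + 1 - l)).map (fun k => m - k)

lemma cl_nil {m l : ℕ} (h : m < l) : cl m l = [] := by
  unfold cl
  have : m + 1 - l = 0 := by omega
  simp [this]

lemma cl_cons {m l : ℕ} (hl : 1 ≤ l) (h : l ≤ m) : cl m l = m :: cl (m-1) l := by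
  unfold cl
  have h1 : m + 1 - l = (m - l) + 1 := by omega
  have h2 : (m - 1) + 1 - l = m - l := by omega
  rw [h1, h2, List.range_succ_eq_map, List.map_cons, List.map_map]
  simp only [Nat.sub_zero]
  refine congrArg (fun z => m :: z) (List.map_congr_left fun k hk => ?_)
  simp only [Function.comp_apply]
  omega

lemma descProd_nil {n : ℕ} : descProd n [] = 1 := rfl

lemma descProd_single {n x : ℕ} : descProd n [x] = 1 := rfl

lemma descProd_cons2 {n a b : ℕ} {M : List ℕ} :
    descProd n (a :: b :: M) = band n a b * descProd n (b :: M) := by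
  simp [descProd]

lemma descProd_append_cons {n : ℕ} (x : ℕ) (M : List ℕ) : ∀ L : List ℕ,
    descProd n (L ++ x :: M) = descProd n (L ++ [x]) * descProd n (x :: M) := by
  intro L
  induction L with
  | nil => simp [descProd_single]
  | cons a L ih =>
    cases L with
    | nil => simp [descProd_cons2, descProd_single, mul_assoc]
    | cons b L' =>
      simp only [List.cons_append, descProd_cons2] at *
      rw [ih, mul_assoc]

lemma band_pred {n m : ℕ} (hm : 1 ≤ m) : band n m (m-1) = sigma n (m-1) := by
  unfold band
  have : m - 1 - (m - 1) = 0 := by omega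
  simp [this]

lemma band_Dp {n t s : ℕ} : band n t s = Dp n (t-1) (s+1) * sigma n s * (Dp n (t-1) (s+1))⁻¹ := by
  unfold band Dp
  have h : (t - 1) + 1 - (s + 1) = t - 1 - s := by omega
  rw [h]

lemma delta_Dp {n : ℕ} : delta n = Dp n (n-1) 1 := by
  unfold delta Dp
  rw [Nat.add_sub_cancel]

lemma descProd_cl {n m l : ℕ} (hl : 1 ≤ l) (h : l ≤ m) :
    descProd n (cl m l) = Dp n (m-1) l := by
  induction m using Nat.strong_induction_on with
  | _ m ih =>
    rcases Nat.lt_or_ge l m with hlt | hge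
    · rw [cl_cons hl h, cl_cons hl (by omega), descProd_cons2,
        ← cl_cons hl (by omega), ih (m-1) (by omega) (by omega),
        band_pred (show 1 ≤ m by omega)]
      rw [Dp_peel_left hl (show l ≤ m - 1 by omega)]
    · have hm : m = l := by omega
      subst hm
      rw [cl_cons hl h, cl_nil (show m - 1 < m by omega), descProd_single,
        Dp_of_lt (show m - 1 < m by omega)]

lemma descProd_cl_append {n m l x : ℕ} (hl : 1 ≤ l) (h : l ≤ m) :
    descProd n (cl m l ++ [x]) = Dp n (m-1) l * band n l x := by
  induction m using Nat.strong_induction_on with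
  | _ m ih =>
    rcases Nat.lt_or_ge l m with hlt | hge
    · rw [cl_cons hl h, cl_cons hl (by omega)]
      simp only [List.cons_append]
      rw [descProd_cons2, ← List.cons_append, ← cl_cons hl (by omega),
        ih (m-1) (by omega) (by omega), band_pred (show 1 ≤ m by omega),
        Dp_peel_left hl (show l ≤ m - 1 by omega), mul_assoc]
    · have hm : m = l := by omega
      subst hm
      rw [cl_cons hl h, cl_nil (show m - 1 < m by omega)]
      simp only [List.nil_append, List.cons_append]
      rw [descProd_cons2, descProd_single, mul_one,
        Dp_of_lt (show m - 1 < m by omega), one_mul]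

/-! ### Main theorem -/

/-- `a_{ts}⁻¹ = δ⁻¹ · δ_{(n,n-1,…,t+1,t,s-1,…,2,1)} · δ_{(t-1,…,s+1,s)}`;
in particular `a_{ts}⁻¹` is `δ⁻¹` times a positive word of length `n - 2` in the
band generators. -/
theorem band_inv_eq (n t s : ℕ)
    (hs : 1 ≤ s) (hst : s < t) (htn : t ≤ n) :
    (band n t s)⁻¹ =
      (delta n)⁻¹ *
        descProd n (((List.range (n - t + 1)).map (fun k => n - k)) ++
                    ((List.range (s - 1)).map (fun k => s - 1 - k))) *
        descProd n ((List.range (t - s)).map (fun k => t - 1 - k)) ∧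
    ((((List.range (n - t + 1)).map (fun k => n - k)) ++
        ((List.range (s - 1)).map (fun k => s - 1 - k))).zip
          ((((List.range (n - t + 1)).map (fun k => n - k)) ++
            ((List.range (s - 1)).map (fun k => s - 1 - k))).tail)).length +
      ((((List.range (t - s)).map (fun k => t - 1 - k))).zip
          (((List.range (t - s)).map (fun k => t - 1 - k)).tail)).length = n - 2 := by
  have hL1 : (List.range (n - t + 1)).map (fun k => n - k) = cl n t := by
    unfold cl; rw [show n + 1 - t = n - t + 1 by omega]
  have hL2 : (List.range (s - 1)).map (fun k => s - 1 - k) = cl (s-1) 1 := by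
    unfold cl; rw [Nat.add_sub_cancel]
  have hL3 : (List.range (t - s)).map (fun k => t - 1 - k) = cl (t-1) s := by
    unfold cl; rw [show t - 1 + 1 - s = t - s by omega]
  constructor
  · -- main equality
    rw [hL1, hL2, hL3]
    have hE : descProd n (cl (t-1) s) = Dp n (t-1-1) s := descProd_cl hs (by omega)
    have hEV : Dp n (t-1-1) s * Dp n (t-1) s = Dp n (t-1) s * Dp n (t-1) (s+1) := by
      have h2 : t - 1 - 1 + 1 = t - 1 := by omega
      have := Dp_shiftProd (n := n) (a := t-1) (b := s) (c := t-1-1) hs (by omega) (by omega)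
        (by omega)
      rwa [h2] at this
    have hVW : Dp n (t-1) s = Dp n (t-1) (s+1) * sigma n s := Dp_peel_right (by omega)
    have h1 : Dp n (t-1-1) s * (Dp n (t-1) (s+1) * sigma n s * (Dp n (t-1) (s+1))⁻¹)
        = Dp n (t-1) s := by
      rw [← mul_assoc, ← hVW, hEV, mul_assoc, mul_inv_cancel, mul_one]
    rcases Nat.lt_or_ge s 2 with hs1 | hs2
    · -- s = 1
      have hsval : s = 1 := by omega
      subst hsval
      rw [cl_nil (show (1:ℕ) - 1 < 1 by omega), List.append_nil]
      rw [descProd_cl (show 1 ≤ t by omega) htn, hE]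
      have hδ : delta n = Dp n (n-1) t * Dp n (t-1) 1 := by
        rw [delta_Dp]
        exact Dp_split (by omega) (by omega) (by omega)
      rw [hδ, band_Dp]
      rw [← h1]
      group
    · -- s ≥ 2
      have hcl2 : cl (s-1) 1 = (s-1) :: cl (s-1-1) 1 := cl_cons (by omega) (by omega)
      rw [hcl2, descProd_append_cons, ← hcl2,
        descProd_cl (show (1:ℕ) ≤ 1 by omega) (show 1 ≤ s - 1 by omega),
        descProd_cl_append (show 1 ≤ t by omega) htn, hE]
      have hbt : band n t (s-1) = Dp n (t-1) s * sigma n (s-1) * (Dp n (t-1) s)⁻¹ := by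
        rw [band_Dp, show s - 1 + 1 = s by omega]
      have hδ : delta n = Dp n (n-1) t * (Dp n (t-1) s * (sigma n (s-1) *
          Dp n (s-1-1) 1)) := by
        rw [delta_Dp, Dp_split (show (1:ℕ) ≤ 1 by omega) (show 1 ≤ t by omega)
          (show t ≤ n - 1 + 1 by omega),
          Dp_split (show (1:ℕ) ≤ 1 by omega) hs (show s ≤ t - 1 + 1 by omega),
          Dp_peel_left (show (1:ℕ) ≤ 1 by omega) (show 1 ≤ s - 1 by omega)]
      have hCV : Commute (Dp n (s-1-1) 1) (Dp n (t-1) s) :=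
        commute_Dp_right fun i hi _ => (commute_sigma_Dp_hi (by omega)).symm
      have key : Dp n (n-1) t * band n t (s-1) * Dp n (s-1-1) 1 * Dp n (t-1-1) s *
            band n t s
          = Dp n (n-1) t * (Dp n (t-1) s * (sigma n (s-1) * Dp n (s-1-1) 1)) := by
        rw [band_Dp (t := t) (s := s), mul_assoc _ (Dp n (t-1-1) s), h1,
          mul_assoc _ (Dp n (s-1-1) 1), hCV.eq, hbt]
        group
      rw [hδ, ← key]
      group
  · -- lengths
    simp only [List.length_zip, List.length_tail, List.length_append, List.length_map,
      List.length_range]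
    omega
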